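/- Let (x_k) solve the difference equation whose characteristic polynomial has distinct real roots λ_1,…,λ_n with |λ_i| ≤ ρ < 1, with initial conditions x_0 = ⋯ = x_{n-2} = 0, x_{n-1} = 1. Then |x_k| ≤ C(k, n-1) ρ^{k-n+1} for all k ≥ n. -/

import Mathlib

/-!
Write `S` for the shift `(S x)ₖ = xₖ₊₁`, so the recurrence reads `P(S) x = 0` with
`P = ∏ (X - λᵢ)`. Splitting off one factor, `z = (S - λ) x` solves the recurrence of order
`n - 1` with the same normalised initial conditions, so by induction
`|zₖ| ≤ C(k, n-2) ρ^(k-n+2)`. Since `xₖ₊₁ = λ xₖ + zₖ`, Pascal's rule then propagates the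
bound `|xₖ| ≤ C(k, n-1) ρ^(k-n+1)` from `k` to `k + 1`.
-/

open Polynomial Finset

section SeqShift

variable (R : Type*) [CommRing R]

def seqShift : Module.End R (ℕ → R) :=
  LinearMap.funLeft R R Nat.succ

variable {R}

lemma seqShift_pow_apply (j : ℕ) (x : ℕ → R) (k : ℕ) :
    (seqShift R ^ j) x k = x (k + j) := by
  induction j generalizing x with
  | zero => rfl
  | succ j ih => rw [pow_succ, Module.End.mul_apply, ih]; rfl

lemma aeval_seqShift_apply (p : R[X]) (x : ℕ → R) (k : ℕ) :
    aeval (seqShift R) p x k = ∑ j ∈ range (p.natDegree + 1), p.coeff j * x (k + j) := by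
  simp [aeval_eq_sum_range, LinearMap.sum_apply, seqShift_pow_apply]

lemma aeval_seqShift_X_sub_C_apply (a : R) (x : ℕ → R) (k : ℕ) :
    aeval (seqShift R) (X - C a) x k = x (k + 1) - a * x k := by
  simp [seqShift, LinearMap.funLeft_apply]

end SeqShift

lemma mul_choose_mul_pow_sub_succ {R : Type*} [CommSemiring R] (ρ : R) (k m : ℕ) :
    ρ * (k.choose (m + 1) * ρ ^ (k - (m + 1))) = k.choose (m + 1) * ρ ^ (k - m) := by
  rcases lt_or_ge k (m + 1) with hk | hk
  · simp [Nat.choose_eq_zero_of_lt hk]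
  · rw [show k - m = k - (m + 1) + 1 by omega, pow_succ]
    ring

lemma abs_le_pow_of_succ_eq_mul {a ρ : ℝ} (ha : |a| ≤ ρ) {x : ℕ → ℝ}
    (hx : ∀ k, x (k + 1) = a * x k) (hx0 : x 0 = 1) (k : ℕ) : |x k| ≤ ρ ^ k := by
  induction k with
  | zero => simp [hx0]
  | succ k ih =>
    rw [hx, abs_mul, pow_succ']
    exact mul_le_mul ha ih (abs_nonneg _) ((abs_nonneg a).trans ha)

lemma abs_le_choose_succ_mul_pow_of_succ_eq {a ρ : ℝ} (ha : |a| ≤ ρ) {x z : ℕ → ℝ} {m : ℕ}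
    (hx : ∀ k, x (k + 1) = a * x k + z k) (hx0 : x 0 = 0)
    (hz : ∀ k, |z k| ≤ k.choose m * ρ ^ (k - m)) (k : ℕ) :
    |x k| ≤ k.choose (m + 1) * ρ ^ (k - (m + 1)) := by
  induction k with
  | zero => simp [hx0]
  | succ k ih =>
    calc |x (k + 1)| ≤ |a| * |x k| + |z k| := by
          rw [hx, ← abs_mul]; exact abs_add_le _ _
      _ ≤ ρ * (k.choose (m + 1) * ρ ^ (k - (m + 1))) + k.choose m * ρ ^ (k - m) :=
          add_le_add (mul_le_mul ha ih (abs_nonneg _) ((abs_nonneg a).trans ha)) (hz k)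
      _ = (k + 1).choose (m + 1) * ρ ^ (k + 1 - (m + 1)) := by
          rw [mul_choose_mul_pow_sub_succ, Nat.choose_succ_succ', Nat.add_sub_add_right]
          push_cast; ring

theorem abs_le_choose_mul_pow_of_aeval_seqShift_eq_zero {ι : Type*} {ρ : ℝ} (s : Finset ι)
    {L : ι → ℝ} (hL : ∀ i ∈ s, |L i| ≤ ρ) {m : ℕ} (hs : s.card = m + 1) {x : ℕ → ℝ}
    (hx : aeval (seqShift ℝ) (∏ i ∈ s, (X - C (L i))) x = 0)
    (h0 : ∀ i < m, x i = 0) (h1 : x m = 1) (k : ℕ) :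
    |x k| ≤ k.choose m * ρ ^ (k - m) := by
  induction s using Finset.cons_induction generalizing m x k with
  | empty => simp at hs
  | cons i t hi ih =>
    set z := aeval (seqShift ℝ) (X - C (L i)) x
    have ha : |L i| ≤ ρ := hL i (mem_cons_self i t)
    have hxz : ∀ k, x (k + 1) = L i * x k + z k := fun k => by
      simp only [z, aeval_seqShift_X_sub_C_apply]; ring
    have hz : aeval (seqShift ℝ) (∏ j ∈ t, (X - C (L j))) z = 0 := by
      rw [prod_cons, mul_comm, aeval_mul] at hx
      exact hx
    rw [card_cons] at hs
    cases m with
    | zero =>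
      have hz0 : z = 0 := by simpa [card_eq_zero.mp (by omega : t.card = 0)] using hz
      simpa using abs_le_pow_of_succ_eq_mul ha (by simpa [hz0] using hxz) h1 k
    | succ m =>
      have hz0 : ∀ j < m, z j = 0 := fun j hj => by
        simp only [z, aeval_seqShift_X_sub_C_apply, h0 j (by omega), h0 (j + 1) (by omega)]
        ring
      have hz1 : z m = 1 := by
        simp only [z, aeval_seqShift_X_sub_C_apply, h1, h0 m (by omega)]
        ring
      exact abs_le_choose_succ_mul_pow_of_succ_eq ha hxz (h0 0 (by omega))
        (ih (fun j hj => hL j (mem_cons_of_mem hj)) (by omega) hz hz0 hz1) k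

theorem stmt15_general (n : ℕ) (hn : 1 ≤ n) (ρ : ℝ) (L : Fin n → ℝ)
    (hL : ∀ i, |L i| ≤ ρ) (x : ℕ → ℝ)
    (hrec : ∀ k : ℕ,
      ∑ j ∈ Finset.range (n + 1),
        (∏ i, (Polynomial.X - Polynomial.C (L i))).coeff j * x (k + j) = 0)
    (hinit0 : ∀ i : ℕ, i < n - 1 → x i = 0) (hinit1 : x (n - 1) = 1) :
    ∀ k : ℕ, n ≤ k → |x k| ≤ (k.choose (n - 1) : ℝ) * ρ ^ (k + 1 - n) := by
  obtain ⟨m, rfl⟩ : ∃ m, n = m + 1 := ⟨n - 1, by omega⟩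
  have hx : aeval (seqShift ℝ) (∏ i, (X - C (L i))) x = 0 := by
    funext k
    simpa [aeval_seqShift_apply] using hrec k
  intro k _
  simpa using abs_le_choose_mul_pow_of_aeval_seqShift_eq_zero univ (fun i _ => hL i)
    (by simp) hx hinit0 hinit1 k

/-- Upper bound: distinct real roots with |λ_i| ≤ ρ < 1, initial conditions (0,…,0,1)
    imply |x_k| ≤ C(k,n-1) ρ^{k-n+1}. -/
theorem stmt15 (n : ℕ) (hn : 1 ≤ n) (ρ : ℝ) (hρ0 : 0 < ρ) (hρ1 : ρ < 1) (L : Fin n → ℝ)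
    (hinj : Function.Injective L) (hL : ∀ i, |L i| ≤ ρ) (x : ℕ → ℝ)
    (hrec : ∀ k : ℕ,
      ∑ j ∈ Finset.range (n + 1),
        (∏ i, (Polynomial.X - Polynomial.C (L i))).coeff j * x (k + j) = 0)
    (hinit0 : ∀ i : ℕ, i < n - 1 → x i = 0) (hinit1 : x (n - 1) = 1) :
    ∀ k : ℕ, n ≤ k → |x k| ≤ (k.choose (n - 1) : ℝ) * ρ ^ (k + 1 - n) :=
  stmt15_general n hn ρ L hL x hrec hinit0 hinit1
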